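/- Let σ ∈ S_j, τ ∈ S_k, and set π = σ⁻¹ (as a word) and δ = (j+1)(τ⁻¹₁+j+1)⋯(τ⁻¹_k+j+1). Then ∑_{μ ∈ σ◊τ} t^{ides(μ)} = ∑_{α ∈ π⧢_l δ} t^{des(α)}, where σ◊τ = {μ = σ'1τ' ∈ S_{j+k+1} : σ' ∼ σ, τ' ∼ τ} and π⧢_l δ is the set of shuffles of π and δ whose first letter is δ₁ = j+1. -/

import Mathlib

open Finset

/-- The word `1, 2, …, n` as a list of integers. -/
def oneTo (n : ℕ) : List ℤ := (List.range n).map (fun i => (i : ℤ) + 1)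

/-- `l` is (the word of) a permutation of `{1, …, n}`. -/
def IsPermWord (n : ℕ) (l : List ℤ) : Prop := l.Perm (oneTo n)

/-- The descent set of a word (1-based positions `i` with `l_i > l_{i+1}`). -/
def desSet (l : List ℤ) : Finset ℕ :=
  (Finset.Ico 1 l.length).filter (fun i => l.getD i 0 < l.getD (i - 1) 0)

/-- Number of descents. -/
def desL (l : List ℤ) : ℕ := (desSet l).card

/-- Major index: sum of descent positions. -/
def majL (l : List ℤ) : ℕ := ∑ i ∈ desSet l, i

/-- The word of the inverse permutation of a permutation word of `{1,…,n}`. -/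
def invWord (l : List ℤ) : List ℤ :=
  (List.range l.length).map (fun i => (l.idxOf ((i : ℤ) + 1) : ℤ) + 1)

/-- Number of inverse descents. -/
def idesL (l : List ℤ) : ℕ := desL (invWord l)

/-- Inverse major index. -/
def imajL (l : List ℤ) : ℕ := majL (invWord l)

/-- Number of inversions. -/
def invL (l : List ℤ) : ℕ :=
  ((Finset.range l.length ×ˢ Finset.range l.length).filter
    (fun p => p.1 < p.2 ∧ l.getD p.2 0 < l.getD p.1 0)).card

/-- Number of right-to-left minima. -/
def rlminL (l : List ℤ) : ℕ :=
  ((Finset.range l.length).filter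
    (fun i => ∀ j ∈ Finset.range l.length, i < j → l.getD i 0 < l.getD j 0)).card

/-- André I permutations (words of distinct integers):
`τ ++ m :: τ'` with `m` the minimum, both factors André I, and
the maximum of `τ ++ τ'` lying in `τ'` (vacuous for the empty factor word). -/
inductive AndreI : List ℤ → Prop
  | node (τ τ' : List ℤ) (m : ℤ) :
      AndreI τ → AndreI τ' →
      (∀ x ∈ τ, m < x) → (∀ x ∈ τ', m < x) →
      (τ ++ τ' = [] ∨ ∃ M ∈ τ', ∀ x ∈ τ ++ τ', x ≤ M) →
      AndreI (τ ++ m :: τ')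
  | nil : AndreI []

/-- André II permutations: as above but the minimum of `τ ++ τ'` lies in `τ'`. -/
inductive AndreII : List ℤ → Prop
  | node (τ τ' : List ℤ) (m : ℤ) :
      AndreII τ → AndreII τ' →
      (∀ x ∈ τ, m < x) → (∀ x ∈ τ', m < x) →
      (τ ++ τ' = [] ∨ ∃ c ∈ τ', ∀ x ∈ τ ++ τ', c ≤ x) →
      AndreII (τ ++ m :: τ')
  | nil : AndreII []

/-- No double descents. -/
def NoDD (l : List ℤ) : Prop :=
  ∀ i, i + 2 < l.length →
    ¬ (l.getD (i + 1) 0 < l.getD i 0 ∧ l.getD (i + 2) 0 < l.getD (i + 1) 0)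

/-- Simsun permutations of `{1,…,n}`: last letter `n`, and no double descents
after removing `n, n-1, …` in order (equivalently, every `{x ≤ k}`-restriction
has no double descents). -/
def Simsun (n : ℕ) (l : List ℤ) : Prop :=
  IsPermWord n l ∧ l.getLast? = some (n : ℤ) ∧
    ∀ k : ℕ, NoDD (l.filter (fun x => decide (x ≤ (k : ℤ))))

/-- Order-isomorphic reduction of a word of distinct letters to `{1,…,len}`. -/
def reduce (l : List ℤ) : List ℤ :=
  l.map (fun x => ((l.filter (fun y => decide (y ≤ x))).length : ℤ))

/-- The set `σ ◊ τ` of permutations `μ = σ' 1 τ'` with `σ' ∼ σ`, `τ' ∼ τ`. -/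
def diam (j k : ℕ) (σ τ : List ℤ) : Set (List ℤ) :=
  {μ | IsPermWord (j + k + 1) μ ∧ ∃ σ' τ' : List ℤ,
    μ = σ' ++ (1 : ℤ) :: τ' ∧ σ'.length = j ∧ τ'.length = k ∧
    reduce σ' = σ ∧ reduce τ' = τ}

/-- The set `σ △ τ`: as `σ ◊ τ`, with the letter `j+k+1` in `τ'`. -/
def tria (j k : ℕ) (σ τ : List ℤ) : Set (List ℤ) :=
  {μ | IsPermWord (j + k + 1) μ ∧ ∃ σ' τ' : List ℤ,
    μ = σ' ++ (1 : ℤ) :: τ' ∧ σ'.length = j ∧ τ'.length = k ∧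
    reduce σ' = σ ∧ reduce τ' = τ ∧ ((j : ℤ) + k + 1) ∈ τ'}

/-- The set `σ ▽ τ`: as `σ ◊ τ`, with the letter `2` in `τ'`. -/
def nab (j k : ℕ) (σ τ : List ℤ) : Set (List ℤ) :=
  {μ | IsPermWord (j + k + 1) μ ∧ ∃ σ' τ' : List ℤ,
    μ = σ' ++ (1 : ℤ) :: τ' ∧ σ'.length = j ∧ τ'.length = k ∧
    reduce σ' = σ ∧ reduce τ' = τ ∧ (2 : ℤ) ∈ τ'}

/-- Binomial coefficient on integers, zero outside `0 ≤ b ≤ a`. -/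
def C (a b : ℤ) : ℤ :=
  if 0 ≤ b ∧ b ≤ a then ((a.toNat).choose b.toNat : ℤ) else 0

/-- Gaussian binomial coefficient (as a polynomial in `q`). -/
noncomputable def qb : ℕ → ℕ → Polynomial ℤ
  | _, 0 => 1
  | 0, _ + 1 => 0
  | a + 1, b + 1 => Polynomial.X ^ (b + 1) * qb a (b + 1) + qb a b

/-- Gaussian binomial coefficient on integer arguments, zero outside `0 ≤ b ≤ a`. -/
noncomputable def qbZ (a b : ℤ) : Polynomial ℤ :=
  if 0 ≤ b ∧ b ≤ a then qb a.toNat b.toNat else 0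

/-- `IsShuffle l₁ l₂ l` : `l` is a shuffle of `l₁` and `l₂`. -/
inductive IsShuffle : List ℤ → List ℤ → List ℤ → Prop
  | nil : IsShuffle [] [] []
  | left (a : ℤ) {l₁ l₂ l : List ℤ} : IsShuffle l₁ l₂ l → IsShuffle (a :: l₁) l₂ (a :: l)
  | right (a : ℤ) {l₁ l₂ l : List ℤ} : IsShuffle l₁ l₂ l → IsShuffle l₁ (a :: l₂) (a :: l)

/-- Unlabeled binary trees: a vertex may have an empty left and/or right subtree. -/
inductive BT where
  | leaf : BT
  | node : BT → BT → BT
deriving DecidableEq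

/-- Number of vertices. -/
def BT.size : BT → ℕ
  | .leaf => 0
  | .node l r => l.size + r.size + 1

/-- No vertex has a left child but no right child. -/
def BT.url : BT → Prop
  | .leaf => True
  | .node l r => l.url ∧ r.url ∧ (l ≠ .leaf → r ≠ .leaf)

/-- Labeled binary trees with integer labels. -/
inductive LTree where
  | leaf : LTree
  | node : LTree → ℤ → LTree → LTree

/-- The shape of a labeled tree. -/
def LTree.shape : LTree → BT
  | .leaf => .leaf
  | .node l _ r => .node l.shape r.shape

/-- The (increasing binary) tree of a word: root is the minimum letter,
left/right subtrees come from the factors before/after it (fuel version). -/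
def treeAux : ℕ → List ℤ → LTree
  | 0, _ => .leaf
  | _ + 1, [] => .leaf
  | n + 1, l => 
      let m := (l.min?).getD 0
      let i := l.idxOf m
      .node (treeAux n (l.take i)) m (treeAux n (l.drop (i + 1)))

/-- The increasing binary tree `T_σ` of a word `σ`. -/
def treeOf (l : List ℤ) : LTree := treeAux l.length l

/-- The shape of the increasing binary tree of a word. -/
def shapeOf (l : List ℤ) : BT := (treeOf l).shape

/-- Reading a labeled binary tree back into a word (inverse of `treeOf`). -/
def wordOfTree : LTree → List ℤ
  | .leaf => []
  | .node l a r => wordOfTree l ++ a :: wordOfTree r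

/-- Relabel a labeled tree by a function on labels. -/
def LTree.relabel (f : ℤ → ℤ) : LTree → LTree
  | .leaf => .leaf
  | .node l a r => .node (l.relabel f) (f a) (r.relabel f)

/-- The labels of vertices not in any left subtree (root together with right spine). -/
def Rset : LTree → Finset ℤ
  | .leaf => ∅
  | .node _ a r => insert a (Rset r)

/-- The relabeling determined by `R = {v₀ < v₁ < ⋯ < v_m}`: `v₀ ↦ 1`,
`v_i ↦ v_{i-1} + 1`, and `x ↦ x + 1` for `x ∉ R`. -/
def relabelFun (R : Finset ℤ) (x : ℤ) : ℤ :=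
  if x ∈ R then ((R.filter (fun y => y < x)).max.unbotD 0) + 1 else x + 1

/-- The bijection `Ω` from simsun permutations to André II permutations,
realized on words via relabeling of the increasing binary tree. -/
def OmegaWord (σ : List ℤ) : List ℤ :=
  wordOfTree ((treeOf σ).relabel (relabelFun (Rset (treeOf σ))))
lemma flatMap_singleton_map {α β : Type} (f : α → β) (l : List α) :
    (l.flatMap fun a => [f a]) = l.map f := by
  induction l with
  | nil => rfl
  | cons a l ih => simp [List.flatMap_cons, ih]

lemma oneTo_eq (n : ℕ) : oneTo n = (List.range n).map (fun i : ℕ => (i:ℤ)+1) := by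
  rw [oneTo]
  show List.map (fun i => i+1) ((List.range n).flatMap fun (a:ℕ) => ([((a:ℤ))]:List ℤ)) = _
  rw [flatMap_singleton_map, List.map_map]; rfl

lemma invWord_eq (l : List ℤ) :
    invWord l = (List.range l.length).map (fun i : ℕ => ((l.idxOf ((i:ℤ)+1) : ℕ) : ℤ) + 1) := by
  rw [invWord]
  show List.map (fun i => ((l.idxOf (i+1) : ℕ) : ℤ) + 1)
      ((List.range l.length).flatMap fun (a:ℕ) => ([((a:ℤ))]:List ℤ)) = _
  rw [flatMap_singleton_map, List.map_map]; rfl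

lemma oneTo_length {n : ℕ} : (oneTo n).length = n := by
  rw [oneTo_eq, List.length_map, List.length_range]

lemma mem_oneTo {n : ℕ} {x : ℤ} : x ∈ oneTo n ↔ 1 ≤ x ∧ x ≤ n := by
  simp only [oneTo_eq, List.mem_map, List.mem_range]
  constructor
  · rintro ⟨i, hi, rfl⟩; omega
  · rintro ⟨h1, h2⟩; exact ⟨(x - 1).toNat, by omega, by omega⟩

lemma oneTo_nodup {n : ℕ} : (oneTo n).Nodup := by
  rw [oneTo_eq]
  exact (List.nodup_range).map (fun x y h => by omega)

lemma oneTo_sorted {n : ℕ} : (oneTo n).Pairwise (· ≤ ·) := by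
  rw [oneTo_eq, List.pairwise_map]
  exact (List.pairwise_lt_range (n := n)).imp (fun h => by omega)

lemma IsPermWord.len {n : ℕ} {l : List ℤ} (h : IsPermWord n l) : l.length = n := by
  simpa [oneTo_length] using h.length_eq

lemma IsPermWord.nodup {n : ℕ} {l : List ℤ} (h : IsPermWord n l) : l.Nodup :=
  h.symm.nodup oneTo_nodup

lemma IsPermWord.mem {n : ℕ} {l : List ℤ} (h : IsPermWord n l) {x : ℤ} :
    x ∈ l ↔ 1 ≤ x ∧ x ≤ n := by rw [List.Perm.mem_iff h, mem_oneTo]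

lemma isPermWord_of {n : ℕ} {l : List ℤ} (hn : l.Nodup) (hlen : l.length = n)
    (hmem : ∀ x ∈ l, 1 ≤ x ∧ x ≤ n) : IsPermWord n l := by
  refine (List.subperm_of_subset hn ?_).perm_of_length_le (by simp [oneTo_length, hlen])
  intro x hx; exact mem_oneTo.2 (hmem x hx)

lemma invWord_eq_map (l : List ℤ) :
    invWord l = (oneTo l.length).map (fun v => ((l.idxOf v : ℕ) : ℤ) + 1) := by
  rw [invWord_eq, oneTo_eq, List.map_map]; rfl

lemma invWord_length (l : List ℤ) : (invWord l).length = l.length := by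
  rw [invWord_eq, List.length_map, List.length_range]

lemma eq_of_perm_of_sorted' {l₁ l₂ : List ℤ} (hp : l₁.Perm l₂)
    (h₁ : l₁.Pairwise (· ≤ ·)) (h₂ : l₂.Pairwise (· ≤ ·)) : l₁ = l₂ :=
  hp.eq_of_pairwise' h₁ h₂

def srt (l : List ℤ) : List ℤ := l.insertionSort (· ≤ ·)

lemma srt_perm (l : List ℤ) : (srt l).Perm l := List.perm_insertionSort _ l
lemma srt_sorted (l : List ℤ) : (srt l).Pairwise (· ≤ ·) := List.pairwise_insertionSort _ l

lemma srt_eq_oneTo {n : ℕ} {l : List ℤ} (h : l.Perm (oneTo n)) : srt l = oneTo n :=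
  eq_of_perm_of_sorted' ((srt_perm l).trans h) (srt_sorted l) oneTo_sorted

def rk (l : List ℤ) (x : ℤ) : ℤ := ((l.filter (fun y => decide (y ≤ x))).length : ℤ)

lemma reduce_eq_map (l : List ℤ) : reduce l = l.map (rk l) := rfl

lemma reduce_length (l : List ℤ) : (reduce l).length = l.length := by
  rw [reduce_eq_map, List.length_map]

lemma rk_mono (l : List ℤ) {x x' : ℤ} (h : x ≤ x') : rk l x ≤ rk l x' := by
  unfold rk
  have := (List.monotone_filter_right l
    (p := fun y => decide (y ≤ x)) (q := fun y => decide (y ≤ x'))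
    (fun a ha => by simp at ha ⊢; omega)).length_le
  exact_mod_cast this

lemma rk_strict (l : List ℤ) {x x' : ℤ} (hx' : x' ∈ l) (h : x < x') : rk l x < rk l x' := by
  unfold rk
  have hsub := (List.monotone_filter_right l
    (p := fun y => decide (y ≤ x)) (q := fun y => decide (y ≤ x'))
    (fun a ha => by simp at ha ⊢; omega))
  have hle := hsub.length_le
  have hne : (l.filter (fun y => decide (y ≤ x))).length ≠ (l.filter (fun y => decide (y ≤ x'))).length := by
    intro heq
    have := hsub.eq_of_length heq
    have hx'mem : x' ∈ l.filter (fun y => decide (y ≤ x')) := by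
      rw [List.mem_filter]; exact ⟨hx', by simp⟩
    rw [← this, List.mem_filter] at hx'mem
    simp at hx'mem; omega
  have : (l.filter (fun y => decide (y ≤ x))).length < (l.filter (fun y => decide (y ≤ x'))).length :=
    lt_of_le_of_ne hle hne
  exact_mod_cast this

lemma rk_inj_on (l : List ℤ) {x x' : ℤ} (hx : x ∈ l) (hx' : x' ∈ l) (h : rk l x = rk l x') :
    x = x' := by
  rcases lt_trichotomy x x' with hlt | heq | hgt
  · exact absurd h (ne_of_lt (rk_strict l hx' hlt))
  · exact heq
  · exact absurd h.symm (ne_of_lt (rk_strict l hx hgt))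

lemma rk_bounds (l : List ℤ) {x : ℤ} (hx : x ∈ l) : 1 ≤ rk l x ∧ rk l x ≤ l.length := by
  constructor
  · have : x ∈ l.filter (fun y => decide (y ≤ x)) := by
      rw [List.mem_filter]; exact ⟨hx, by simp⟩
    have := List.length_pos_of_mem this
    unfold rk; exact_mod_cast this
  · have := List.length_filter_le (fun y => decide (y ≤ x)) l
    unfold rk; exact_mod_cast this

lemma reduce_permWord {l : List ℤ} (hl : l.Nodup) : IsPermWord l.length (reduce l) := by
  apply isPermWord_of
  · rw [reduce_eq_map]
    exact hl.map_on (fun x hx y hy h => rk_inj_on l hx hy h)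
  · exact reduce_length l
  · intro x hx
    rw [reduce_eq_map, List.mem_map] at hx
    obtain ⟨v, hv, rfl⟩ := hx
    exact rk_bounds l hv

lemma idxOf_map_on (f : ℤ → ℤ) (v : ℤ) (l : List ℤ)
    (hinj : ∀ y ∈ l, f y = f v → y = v) (hv : v ∈ l) :
    (l.map f).idxOf (f v) = l.idxOf v := by
  induction l with
  | nil => cases hv
  | cons a l ih =>
    by_cases ha : a = v
    · subst ha; simp
    · have hfa : f a ≠ f v := fun h => ha (hinj a (.head l) h)
      rw [List.map_cons, List.idxOf_cons_ne _ hfa, List.idxOf_cons_ne _ ha,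
        ih (fun y hy => hinj y (.tail _ hy)) (List.mem_of_ne_of_mem (Ne.symm ha) hv)]

lemma invWord_reduce {l : List ℤ} (hl : l.Nodup) :
    invWord (reduce l) = (srt l).map (fun v => ((l.idxOf v : ℕ) : ℤ) + 1) := by
  have hperm := reduce_permWord hl
  rw [invWord_eq_map, reduce_length]
  have honeto : oneTo l.length = (srt l).map (rk l) := by
    refine (eq_of_perm_of_sorted' ?_ ?_ oneTo_sorted).symm
    · exact ((srt_perm l).map _).trans (by rw [← reduce_eq_map]; exact hperm)
    · rw [List.pairwise_map]
      exact (srt_sorted l).imp (fun h => rk_mono l h)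
  rw [honeto, List.map_map]
  apply List.map_congr_left
  intro v hv
  have hv' : v ∈ l := (srt_perm l).subset hv
  show ((reduce l).idxOf (rk l v) : ℤ) + 1 = _
  rw [reduce_eq_map, idxOf_map_on (rk l) v l (fun y hy h => rk_inj_on l hy hv' h) hv']

lemma invWord_permWord {n : ℕ} {l : List ℤ} (h : IsPermWord n l) : IsPermWord n (invWord l) := by
  apply isPermWord_of
  · rw [invWord_eq_map, h.len]
    apply oneTo_nodup.map_on
    intro x hx y hy hxy
    have hx' : x ∈ l := h.mem.2 (mem_oneTo.1 hx)
    have hy' : y ∈ l := h.mem.2 (mem_oneTo.1 hy)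
    have : List.idxOf x l = List.idxOf y l := by omega
    exact (List.idxOf_inj hx').1 this
  · rw [invWord_length, h.len]
  · intro x hx
    rw [invWord_eq_map] at hx
    obtain ⟨v, hv, rfl⟩ := List.mem_map.1 hx
    have hb := mem_oneTo.1 hv
    have hn := h.len
    have hvl : v ∈ l := h.mem.2 (by omega)
    have hlt := List.idxOf_lt_length_iff.2 hvl
    omega

lemma getElem_invWord (l : List ℤ) (i : ℕ) (hi : i < (invWord l).length) :
    (invWord l)[i] = ((l.idxOf ((i:ℤ)+1) : ℕ) : ℤ) + 1 := by
  have := hi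
  rw [invWord_length] at this
  simp [invWord_eq]

lemma nodup_idxOf_getElem {l : List ℤ} (hl : l.Nodup) {i : ℕ} (hi : i < l.length) :
    l.idxOf l[i] = i := by
  have hmem : l[i] ∈ l := List.getElem_mem _
  have h1 : l.idxOf l[i] < l.length := List.idxOf_lt_length_iff.2 hmem
  have h2 : l[l.idxOf l[i]]'h1 = l[i] := List.getElem_idxOf h1
  exact (List.Nodup.getElem_inj_iff hl).1 h2

lemma invWord_invWord {n : ℕ} {l : List ℤ} (h : IsPermWord n l) : invWord (invWord l) = l := by
  have hlen2 : (invWord (invWord l)).length = l.length := by rw [invWord_length, invWord_length]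
  apply List.ext_getElem hlen2
  intro i h1 h2
  have hvmem : l[i] ∈ l := List.getElem_mem _
  have hvb := h.mem.1 hvmem
  have hn := h.len
  set p : ℕ := (l[i] - 1).toNat with hp
  have hpl : p < l.length := by omega
  have hpv : (p : ℤ) + 1 = l[i] := by omega
  have hpl' : p < (invWord l).length := by rw [invWord_length]; exact hpl
  have hinv : (invWord l)[p] = (i : ℤ) + 1 := by
    rw [getElem_invWord l p hpl', hpv, nodup_idxOf_getElem h.nodup h2]
  have hnodup : (invWord l).Nodup := (invWord_permWord h).nodup
  have hidx : (invWord l).idxOf ((i : ℤ)+1) = p := by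
    rw [← hinv]; exact nodup_idxOf_getElem hnodup hpl'
  rw [getElem_invWord _ i h1, hidx, hpv]


lemma isShuffle_filter (p : ℤ → Bool) (l : List ℤ) :
    IsShuffle (l.filter p) (l.filter (fun x => !p x)) l := by
  induction l with
  | nil => exact .nil
  | cons a l ih =>
    by_cases h : p a
    · simpa [List.filter_cons, h] using IsShuffle.left a ih
    · have h' : p a = false := by simpa using h
      simpa [List.filter_cons, h'] using IsShuffle.right a ih

lemma IsShuffle.perm {l₁ l₂ l : List ℤ} (h : IsShuffle l₁ l₂ l) : l.Perm (l₁ ++ l₂) := by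
  induction h with
  | nil => exact .refl _
  | left a _ ih => exact ih.cons a
  | right a _ ih => exact (ih.cons a).trans List.perm_middle.symm

lemma IsShuffle.filter_eq {p : ℤ → Bool} {l₁ l₂ l : List ℤ} (h : IsShuffle l₁ l₂ l)
    (h₁ : ∀ x ∈ l₁, p x = true) (h₂ : ∀ x ∈ l₂, p x = false) :
    l.filter p = l₁ ∧ l.filter (fun x => !p x) = l₂ := by
  induction h with
  | nil => simp
  | left a hs ih =>
    have ha : p a = true := h₁ a (.head _)
    have := ih (fun x hx => h₁ x (.tail _ hx)) h₂
    simp [List.filter_cons, ha, this.1, this.2]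
  | right a hs ih =>
    have ha : p a = false := h₂ a (.head _)
    have := ih h₁ (fun x hx => h₂ x (.tail _ hx))
    simp [List.filter_cons, ha, this.1, this.2]

lemma oneTo_concat (j k : ℕ) :
    oneTo (j + k + 1) = oneTo j ++ ((j:ℤ)+1) :: (oneTo k).map (· + ((j:ℤ)+1)) := by
  have : j + k + 1 = j + (k + 1) := by omega
  rw [this, oneTo_eq, List.range_add, List.map_append, List.range_succ_eq_map]
  congr 1
  · rw [oneTo_eq]
  · rw [List.map_cons, List.map_map, oneTo_eq, List.map_map, List.map_cons, List.map_map]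
    congr 1
    apply List.map_congr_left
    intro a _
    simp only [Function.comp_apply, Nat.succ_eq_add_one]
    push_cast; ring

lemma core {j k : ℕ} {μ σ' τ' : List ℤ} (hμ : IsPermWord (j+k+1) μ)
    (he : μ = σ' ++ (1:ℤ) :: τ') (hj : σ'.length = j) (hk : τ'.length = k) :
    (invWord μ).filter (fun x => decide (x ≤ (j:ℤ))) = invWord (reduce σ') ∧
    (invWord μ).filter (fun x => !decide (x ≤ (j:ℤ))) =
      ((j:ℤ)+1) :: (invWord (reduce τ')).map (· + ((j:ℤ)+1)) ∧
    (invWord μ).head? = some ((j:ℤ)+1) := by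
  have hn : μ.length = j + k + 1 := hμ.len
  have hnodup : μ.Nodup := hμ.nodup
  rw [he] at hnodup
  have hσn : σ'.Nodup := hnodup.of_append_left
  have hcons : ((1:ℤ) :: τ').Nodup := hnodup.of_append_right
  have hτn : τ'.Nodup := (List.nodup_cons.1 hcons).2
  have h1τ : (1:ℤ) ∉ τ' := (List.nodup_cons.1 hcons).1
  have hdisj : σ'.Disjoint ((1:ℤ) :: τ') := List.disjoint_of_nodup_append hnodup
  have h1σ : (1:ℤ) ∉ σ' := fun h => hdisj h (List.mem_cons_self)
  have hτσ : ∀ v ∈ τ', v ∉ σ' := fun v hv hvσ => hdisj hvσ (List.mem_cons_of_mem _ hv)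
  have hidx1 : μ.idxOf (1:ℤ) = j := by
    rw [he, List.idxOf_append_of_notMem h1σ, List.idxOf_cons_self, hj]
    omega
  have hidxσ : ∀ v ∈ σ', μ.idxOf v = σ'.idxOf v := by
    intro v hv; rw [he, List.idxOf_append_of_mem hv]
  have hidxτ : ∀ v ∈ τ', μ.idxOf v = j + (τ'.idxOf v + 1) := by
    intro v hv
    have hv1 : v ≠ 1 := fun h => h1τ (h ▸ hv)
    rw [he, List.idxOf_append_of_notMem (hτσ v hv), List.idxOf_cons_ne _ (Ne.symm hv1), hj]
  have hmemμ : ∀ v : ℤ, v ∈ μ ↔ (v ∈ σ' ∨ v = 1 ∨ v ∈ τ') := by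
    intro v; rw [he]; simp
  set g : ℤ → ℤ := fun v => ((μ.idxOf v : ℕ) : ℤ) + 1 with hg
  have hmap : invWord μ = (oneTo (j+k+1)).map g := by rw [invWord_eq_map, hn]
  have hgσ : ∀ v ∈ σ', g v ≤ (j:ℤ) := by
    intro v hv
    have := hidxσ v hv
    have h2 : σ'.idxOf v < j := hj ▸ List.idxOf_lt_length_iff.2 hv
    simp only [hg]; omega
  have hgτ : ∀ v ∈ τ', ¬ (g v ≤ (j:ℤ)) := by
    intro v hv
    have := hidxτ v hv
    simp only [hg]; omega
  have hg1 : g 1 = (j:ℤ) + 1 := by simp only [hg, hidx1]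
  have hclass : ∀ v ∈ oneTo (j+k+1), (decide (g v ≤ (j:ℤ)) = true ↔ v ∈ σ') := by
    intro v hv
    have hvμ : v ∈ μ := hμ.mem.2 (mem_oneTo.1 hv)
    rcases (hmemμ v).1 hvμ with h | h | h
    · simp only [decide_eq_true_eq]
      exact ⟨fun _ => h, fun _ => hgσ v h⟩
    · subst h
      simp only [hg1, decide_eq_true_eq]
      constructor
      · intro hc; omega
      · intro hc; exact absurd hc h1σ
    · simp only [decide_eq_true_eq]
      constructor
      · intro hc; exact absurd hc (hgτ v h)
      · intro hc; exact absurd hc (hτσ v h)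
  have hmemσ' : ∀ v ∈ σ', v ∈ oneTo (j+k+1) := by
    intro v hv
    exact mem_oneTo.2 (hμ.mem.1 ((hmemμ v).2 (Or.inl hv)))
  have hmemτ' : ∀ v ∈ τ', v ∈ oneTo (j+k+1) := by
    intro v hv
    exact mem_oneTo.2 (hμ.mem.1 ((hmemμ v).2 (Or.inr (Or.inr hv))))
  -- part 1
  have hfil1 : (oneTo (j+k+1)).filter (fun v => decide (g v ≤ (j:ℤ))) = srt σ' := by
    refine eq_of_perm_of_sorted' ?_ (oneTo_sorted.filter _) (srt_sorted σ')
    refine (List.perm_ext_iff_of_nodup (oneTo_nodup.filter _)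
      ((srt_perm σ').symm.nodup hσn)).2 ?_
    intro a
    rw [List.mem_filter, (srt_perm σ').mem_iff]
    constructor
    · rintro ⟨ha, hd⟩; exact (hclass a ha).1 hd
    · intro ha; exact ⟨hmemσ' a ha, (hclass a (hmemσ' a ha)).2 ha⟩
  have part1 : (invWord μ).filter (fun x => decide (x ≤ (j:ℤ))) = invWord (reduce σ') := by
    rw [hmap, List.filter_map, invWord_reduce hσn]
    show List.map g ((oneTo (j+k+1)).filter (fun v => decide (g v ≤ (j:ℤ)))) = _
    rw [hfil1]
    apply List.map_congr_left
    intro v hv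
    have hv' : v ∈ σ' := (srt_perm σ').subset hv
    simp only [hg, hidxσ v hv']
  -- part 2
  have hfil2 : (oneTo (j+k+1)).filter (fun v => !decide (g v ≤ (j:ℤ))) = 1 :: srt τ' := by
    refine eq_of_perm_of_sorted' ?_ (oneTo_sorted.filter _) ?_
    · refine (List.perm_ext_iff_of_nodup (oneTo_nodup.filter _) ?_).2 ?_
      · exact List.nodup_cons.2 ⟨fun h => h1τ ((srt_perm τ').subset h), (srt_perm τ').symm.nodup hτn⟩
      · intro a
        rw [List.mem_filter, List.mem_cons, (srt_perm τ').mem_iff]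
        constructor
        · rintro ⟨ha, hd⟩
          have hd' : ¬ (g a ≤ (j:ℤ)) := by simpa using hd
          have haμ : a ∈ μ := hμ.mem.2 (mem_oneTo.1 ha)
          rcases (hmemμ a).1 haμ with h | h | h
          · exact absurd (hgσ a h) hd'
          · exact Or.inl h
          · exact Or.inr h
        · rintro (rfl | ha)
          · refine ⟨mem_oneTo.2 ⟨le_refl 1, by push_cast; omega⟩, by simp [hg1]⟩
          · exact ⟨hmemτ' a ha, by simpa using hgτ a ha⟩
    · rw [List.pairwise_cons]
      refine ⟨fun b hb => ?_, srt_sorted τ'⟩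
      have : b ∈ τ' := (srt_perm τ').subset hb
      exact (mem_oneTo.1 (hmemτ' b this)).1
  have part2 : (invWord μ).filter (fun x => !decide (x ≤ (j:ℤ))) =
      ((j:ℤ)+1) :: (invWord (reduce τ')).map (· + ((j:ℤ)+1)) := by
    rw [hmap, List.filter_map, invWord_reduce hτn]
    show List.map g ((oneTo (j+k+1)).filter (fun v => !decide (g v ≤ (j:ℤ)))) = _
    rw [hfil2, List.map_cons, hg1, List.map_map]
    congr 1
    apply List.map_congr_left
    intro v hv
    have hv' : v ∈ τ' := (srt_perm τ').subset hv
    simp only [hg, Function.comp_apply, hidxτ v hv']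
    push_cast; ring
  refine ⟨part1, part2, ?_⟩
  -- head
  have hlen0 : 0 < (invWord μ).length := by rw [invWord_length, hn]; omega
  rw [List.head?_eq_getElem?, List.getElem?_eq_getElem hlen0, getElem_invWord μ 0 hlen0]
  norm_num [hidx1]

/-- The `ides`-distribution over `σ ◊ τ` equals the `des`-distribution over the
first-letter-restricted shuffles of `π = σ⁻¹` and `δ = (j+1)(τ⁻¹ + (j+1))`. -/
theorem ides_diamond_eq_des_shuffle (j k : ℕ) (σ τ : List ℤ)
    (hσ : IsPermWord j σ) (hτ : IsPermWord k τ) (t : ℤ) :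
    ∑ᶠ μ ∈ diam j k σ τ, t ^ idesL μ =
      ∑ᶠ α ∈ {α : List ℤ |
          IsShuffle (invWord σ) (((j : ℤ) + 1) :: (invWord τ).map (· + ((j : ℤ) + 1))) α ∧
          α.head? = some ((j : ℤ) + 1)},
        t ^ desL α := by
  classical
  refine finsum_mem_eq_of_bijOn invWord ⟨?_, ?_, ?_⟩ (fun μ hμ => rfl)
  · -- MapsTo
    rintro μ ⟨hp, σ', τ', he, hj, hk, hrσ, hrτ⟩
    obtain ⟨p1, p2, p3⟩ := core hp he hj hk
    rw [hrσ] at p1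
    rw [hrτ] at p2
    refine ⟨?_, p3⟩
    have := isShuffle_filter (fun x => decide (x ≤ (j:ℤ))) (invWord μ)
    rwa [p1, p2] at this
  · -- InjOn
    rintro a ⟨ha, _⟩ b ⟨hb, _⟩ hab
    rw [← invWord_invWord ha, hab, invWord_invWord hb]
  · -- SurjOn
    rintro α ⟨hsh, hhead⟩
    have hπ : IsPermWord j (invWord σ) := invWord_permWord hσ
    have hτ' : IsPermWord k (invWord τ) := invWord_permWord hτ
    have hαperm : IsPermWord (j+k+1) α := by
      refine hsh.perm.trans ?_
      rw [IsPermWord] at *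
      rw [oneTo_concat j k]
      exact (hπ.append ((hτ'.map (· + ((j:ℤ)+1))).cons ((j:ℤ)+1)))
    have hback : invWord (invWord α) = α := invWord_invWord hαperm
    set μ := invWord α with hμdef
    have hμperm : IsPermWord (j+k+1) μ := invWord_permWord hαperm
    have hμlen : μ.length = j + k + 1 := hμperm.len
    have hjlt : j < μ.length := by omega
    obtain ⟨rest, rfl⟩ : ∃ rest, α = ((j:ℤ)+1) :: rest := by
      cases α with
      | nil => simp at hhead
      | cons a rest =>
        rw [List.head?_cons, Option.some_inj] at hhead
        exact ⟨rest, by rw [hhead]⟩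
    have hμj : μ[j] = 1 := by
      have h0 : (((j:ℤ)+1) :: rest).idxOf ((j:ℤ)+1) = 0 := List.idxOf_cons_self
      rw [List.getElem_of_eq hμdef hjlt, getElem_invWord _ j (hμdef ▸ hjlt)]
      push_cast
      rw [h0]
      norm_num
    have hdecomp : μ = μ.take j ++ (1:ℤ) :: μ.drop (j+1) := by
      conv_lhs => rw [← List.take_append_drop j μ]
      rw [List.drop_eq_getElem_cons hjlt, hμj]
    have hjlen : (μ.take j).length = j := by rw [List.length_take]; omega
    have hklen : (μ.drop (j+1)).length = k := by rw [List.length_drop]; omega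
    obtain ⟨p1, p2, p3⟩ := core hμperm hdecomp hjlen hklen
    -- filters of α
    have hfl := hsh.filter_eq (p := fun x => decide (x ≤ (j:ℤ)))
      (fun x hx => by
        have := (hπ.mem.1 hx).2
        simpa using this)
      (fun x hx => by
        rcases List.mem_cons.1 hx with rfl | hx
        · simp
        · obtain ⟨y, hy, rfl⟩ := List.mem_map.1 hx
          have := (hτ'.mem.1 hy).1
          simp only [decide_eq_false_iff_not, not_le]
          omega)
    rw [hback] at p1 p2
    rw [hfl.1] at p1
    rw [hfl.2] at p2
    -- σ side
    have hσ''n : (μ.take j).Nodup := hμperm.nodup.sublist (List.take_sublist j μ)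
    have hτ''n : (μ.drop (j+1)).Nodup := hμperm.nodup.sublist (List.drop_sublist (j+1) μ)
    have hredσ : IsPermWord j (reduce (μ.take j)) := by
      have := reduce_permWord hσ''n; rwa [hjlen] at this
    have hredτ : IsPermWord k (reduce (μ.drop (j+1))) := by
      have := reduce_permWord hτ''n; rwa [hklen] at this
    have hrσ : reduce (μ.take j) = σ := by
      rw [← invWord_invWord hredσ, ← p1, invWord_invWord hσ]
    have hτmap : invWord (reduce (μ.drop (j+1))) = invWord τ := by
      have := p2
      rw [List.cons.injEq] at this
      have hmap := this.2
      have hinj : Function.Injective (fun x : ℤ => x + ((j:ℤ)+1)) := fun a b h => by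
        simpa using h
      exact (List.map_injective_iff.2 hinj) hmap.symm
    have hrτ : reduce (μ.drop (j+1)) = τ := by
      rw [← invWord_invWord hredτ, hτmap, invWord_invWord hτ]
    exact ⟨μ, ⟨hμperm, μ.take j, μ.drop (j+1), hdecomp, hjlen, hklen, hrσ, hrτ⟩, hback⟩
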